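/- arXiv:2405.00364 — 4 statements merged into one kernel-verified Lean document; each statement's English description precedes it below -/
import Mathlib

section
/- Let (Ω, F, P) be a probability space, τ ∈ ℝ^d, σ > 0, and let z : Ω × ℝ^d → ℝ be jointly measurable such that, for almost every ω, z(ω,·) restricted to C(τ,B) is square integrable, and E[∫_{C(τ,B)} z(t)² dt] = σ² B^d. Then ∑_{j=1}^M E[((z ⋆ ψ_j)(τ))²] ≤ σ² B^d. Consequently, if in addition ‖τ_i − τ_l‖_∞ ≥ B for all i ≠ l and E[S^z(τ_l)] := ∑_{j=1}^M E[((z ⋆ ψ_j)(τ_l))²] > 0 for some center τ_l, then the projected signal-to-noise ratio at τ_l is at least the input signal-to-noise ratio: S^x(τ_l)/E[S^z(τ_l)] ≥ ‖a_l‖²/(σ² B^d). -/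
open MeasureTheory Finset

/-- Correlation `(f ⋆ g)(t) = ∫ f(u) g(u − t) du`. -/
noncomputable def corr {d : ℕ} (f g : (Fin d → ℝ) → ℝ) (t : Fin d → ℝ) : ℝ :=
  ∫ u, f u * g (u - t)

/-- Score map `S^f(t) = ∑_j ((f ⋆ ψ_j)(t))²`. -/
noncomputable def score {d M : ℕ} (ψ : Fin M → (Fin d → ℝ) → ℝ)
    (f : (Fin d → ℝ) → ℝ) (t : Fin d → ℝ) : ℝ :=
  ∑ j, (corr f (ψ j) t) ^ 2

/-- The clean signal `x(t) = ∑_i ∑_j a_{ij} ψ_j(t − τ_i)`. -/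
noncomputable def cleanSignal {d M N : ℕ} (ψ : Fin M → (Fin d → ℝ) → ℝ)
    (τ : Fin N → Fin d → ℝ) (a : Fin N → Fin M → ℝ) : (Fin d → ℝ) → ℝ :=
  fun t => ∑ i, ∑ j, a i j * ψ j (t - τ i)

/-- The open hypercube `C(t₀,s) = {t : ‖t − t₀‖_∞ < s/2}`. -/
def cube {d : ℕ} (t₀ : Fin d → ℝ) (s : ℝ) : Set (Fin d → ℝ) :=
  {t | ‖t - t₀‖ < s / 2}

namespace SNRAux

lemma cube_measurable {d : ℕ} (t₀ : Fin d → ℝ) (s : ℝ) : MeasurableSet (cube t₀ s) :=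
  (isOpen_lt ((continuous_id.sub continuous_const).norm) continuous_const).measurableSet

lemma integrable_mul_of_memL2 {α : Type*} [MeasurableSpace α] {μ : Measure α}
    {f g : α → ℝ} (hf : MemLp f 2 μ) (hg : MemLp g 2 μ) :
    Integrable (fun x => f x * g x) μ := by
  have h : MemLp (f • g) 1 μ := by
    exact hg.smul hf
  rw [← memLp_one_iff_integrable]
  exact h

lemma shift_memL2 {d : ℕ} (B : ℝ) (ψj : (Fin d → ℝ) → ℝ) (hc : Continuous ψj)
    (hs : ∀ t, ψj t ≠ 0 → ‖t‖ < B / 2) (τ : Fin d → ℝ) :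
    MemLp (fun u => ψj (u - τ)) 2 (volume : Measure (Fin d → ℝ)) := by
  have hcont : Continuous fun u : Fin d → ℝ => ψj (u - τ) :=
    hc.comp (continuous_id.sub continuous_const)
  have hcs : HasCompactSupport fun u : Fin d → ℝ => ψj (u - τ) := by
    refine HasCompactSupport.intro (K := Metric.closedBall τ (B / 2))
      (isCompact_closedBall τ (B / 2)) ?_
    intro x hx
    by_contra h
    exact hx (by
      rw [Metric.mem_closedBall, dist_eq_norm]
      exact le_of_lt (hs _ h))
  exact hcont.memLp_of_hasCompactSupport hcs

/-- Bessel's inequality in the concrete form used in the theorem. -/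
lemma bessel {d M : ℕ} (B : ℝ) (ψ : Fin M → (Fin d → ℝ) → ℝ)
    (hcont : ∀ j, Continuous (ψ j))
    (hsupp : ∀ j, ∀ t : Fin d → ℝ, ψ j t ≠ 0 → ‖t‖ < B / 2)
    (horth : ∀ k j, (∫ u, ψ k u * ψ j u) = if k = j then (1 : ℝ) else 0)
    (τ : Fin d → ℝ) (f : (Fin d → ℝ) → ℝ)
    (hfm : AEStronglyMeasurable f (volume.restrict (cube τ B)))
    (hf2 : IntegrableOn (fun t => f t ^ 2) (cube τ B)) :
    ∑ j, (corr f (ψ j) τ) ^ 2 ≤ ∫ t in cube τ B, f t ^ 2 := by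
  have hcube : MeasurableSet (cube τ B) := cube_measurable τ B
  set g : (Fin d → ℝ) → ℝ := (cube τ B).indicator f with hg_def
  have hg2 : MemLp g 2 (volume : Measure (Fin d → ℝ)) :=
    (memLp_indicator_iff_restrict hcube).2 ((memLp_two_iff_integrable_sq hfm).2 hf2)
  have hψ : ∀ j, MemLp (fun u => ψ j (u - τ)) 2 (volume : Measure (Fin d → ℝ)) :=
    fun j => shift_memL2 B (ψ j) (hcont j) (hsupp j) τ
  -- pointwise : f u * ψ j (u - τ) = g u * ψ j (u - τ)
  have hpt : ∀ j u, f u * ψ j (u - τ) = g u * ψ j (u - τ) := by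
    intro j u
    by_cases hu : u ∈ cube τ B
    · simp [hg_def, Set.indicator_of_mem hu]
    · have : ψ j (u - τ) = 0 := by
        by_contra h
        exact hu (hsupp j _ h)
      simp [this]
  have hcorr : ∀ j, corr f (ψ j) τ = ∫ u, g u * ψ j (u - τ) := by
    intro j
    unfold corr
    congr 1
    funext u
    exact hpt j u
  set c : Fin M → ℝ := fun j => corr f (ψ j) τ with hc_def
  set s : (Fin d → ℝ) → ℝ := fun u => ∑ j, c j * ψ j (u - τ) with hs_def
  have hs2 : MemLp s 2 (volume : Measure (Fin d → ℝ)) := by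
    refine memLp_finset_sum univ (fun j _ => ?_)
    exact (hψ j).const_mul (c j)
  -- integrabilities
  have Ig2 : Integrable (fun u => g u ^ 2) (volume : Measure (Fin d → ℝ)) :=
    (memLp_two_iff_integrable_sq hg2.1).1 hg2
  have Is2 : Integrable (fun u => s u ^ 2) (volume : Measure (Fin d → ℝ)) := by
    have := (memLp_two_iff_integrable_sq hs2.1).1 hs2
    exact this
  have Igψ : ∀ j, Integrable (fun u => g u * ψ j (u - τ)) (volume : Measure (Fin d → ℝ)) :=
    fun j => integrable_mul_of_memL2 hg2 (hψ j)
  have Igs : Integrable (fun u => g u * s u) (volume : Measure (Fin d → ℝ)) :=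
    integrable_mul_of_memL2 hg2 hs2
  have Iψψ : ∀ j k, Integrable (fun u => ψ j (u - τ) * ψ k (u - τ))
      (volume : Measure (Fin d → ℝ)) :=
    fun j k => integrable_mul_of_memL2 (hψ j) (hψ k)
  -- ∫ g s = ∑ c j ^ 2
  have hgs : (∫ u, g u * s u) = ∑ j, c j ^ 2 := by
    calc (∫ u, g u * s u) = ∫ u, ∑ j, c j * (g u * ψ j (u - τ)) := by
          congr 1
          funext u
          rw [hs_def, Finset.mul_sum]
          exact Finset.sum_congr rfl (fun j _ => by ring)
      _ = ∑ j, ∫ u, c j * (g u * ψ j (u - τ)) :=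
          integral_finset_sum _ (fun j _ => (Igψ j).const_mul (c j))
      _ = ∑ j, c j ^ 2 := by
          refine Finset.sum_congr rfl (fun j _ => ?_)
          rw [integral_const_mul, ← hcorr j, sq]
  -- ∫ s² = ∑ c j ^ 2
  have hss : (∫ u, s u ^ 2) = ∑ j, c j ^ 2 := by
    have hsq : ∀ u, s u ^ 2 = ∑ j, ∑ k, (c j * c k) * (ψ j (u - τ) * ψ k (u - τ)) := by
      intro u
      rw [hs_def, sq, Finset.sum_mul_sum]
      exact Finset.sum_congr rfl (fun j _ => Finset.sum_congr rfl (fun k _ => by ring))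
    calc (∫ u, s u ^ 2) = ∫ u, ∑ j, ∑ k, (c j * c k) * (ψ j (u - τ) * ψ k (u - τ)) := by
          congr 1; funext u; exact hsq u
      _ = ∑ j, ∫ u, ∑ k, (c j * c k) * (ψ j (u - τ) * ψ k (u - τ)) := by
          refine integral_finset_sum _ (fun j _ => ?_)
          exact integrable_finset_sum _ (fun k _ => (Iψψ j k).const_mul _)
      _ = ∑ j, ∑ k, ∫ u, (c j * c k) * (ψ j (u - τ) * ψ k (u - τ)) := by
          refine Finset.sum_congr rfl (fun j _ => ?_)
          exact integral_finset_sum _ (fun k _ => (Iψψ j k).const_mul _)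
      _ = ∑ j, ∑ k, (c j * c k) * (if j = k then (1:ℝ) else 0) := by
          refine Finset.sum_congr rfl (fun j _ => Finset.sum_congr rfl (fun k _ => ?_))
          rw [integral_const_mul]
          congr 1
          have := integral_sub_right_eq_self (μ := (volume : Measure (Fin d → ℝ)))
            (fun u => ψ j u * ψ k u) τ
          rw [this, horth j k]
      _ = ∑ j, c j ^ 2 := by
          refine Finset.sum_congr rfl (fun j _ => ?_)
          simp [mul_ite, Finset.sum_ite_eq]
          ring
  -- expand the square
  have e1 : (∫ u, (g u - s u) ^ 2)
      = (∫ u, g u ^ 2) - 2 * (∫ u, g u * s u) + (∫ u, s u ^ 2) := by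
    have h1 : (∫ u, (g u - s u) ^ 2)
        = ∫ u, ((g u ^ 2 - 2 * (g u * s u)) + s u ^ 2) := by
      congr 1; funext u; ring
    have Isub : Integrable (fun u => g u ^ 2 - 2 * (g u * s u))
        (volume : Measure (Fin d → ℝ)) := Ig2.sub (Igs.const_mul 2)
    rw [h1, integral_add Isub Is2, integral_sub Ig2 (Igs.const_mul 2), integral_const_mul]
  have hnn : 0 ≤ ∫ u, (g u - s u) ^ 2 := integral_nonneg (fun u => sq_nonneg _)
  have hkey : ∑ j, c j ^ 2 ≤ ∫ u, g u ^ 2 := by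
    rw [e1, hgs, hss] at hnn
    linarith
  have hgf : (∫ u, g u ^ 2) = ∫ t in cube τ B, f t ^ 2 := by
    have : (fun u => g u ^ 2) = (cube τ B).indicator (fun t => f t ^ 2) := by
      funext u
      by_cases hu : u ∈ cube τ B <;>
        simp [hg_def, Set.indicator_apply, hu]
    rw [this, integral_indicator hcube]
  rw [← hgf]
  exact hkey

end SNRAux

/-- the expected projected noise energy at a point is at most `σ² B^d`
(Bessel's inequality), and consequently the projected SNR at a center `τ l` is at least
the input SNR `‖a_l‖²/(σ² B^d)`. -/
theorem projected_snr_ge_input_snr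
    (d M N : ℕ) (hd : 1 ≤ d) (hM : 1 ≤ M) (hN : 1 ≤ N) (B : ℝ) (hB : 0 < B)
    (ψ : Fin M → (Fin d → ℝ) → ℝ)
    (hcont : ∀ j, Continuous (ψ j))
    (hsupp : ∀ j, ∀ t : Fin d → ℝ, ψ j t ≠ 0 → ‖t‖ < B / 2)
    (horth : ∀ k j, (∫ u, ψ k u * ψ j u) = if k = j then (1 : ℝ) else 0)
    (τ : Fin N → Fin d → ℝ) (a : Fin N → Fin M → ℝ)
    (Ω : Type*) [MeasurableSpace Ω] (P : Measure Ω) [IsProbabilityMeasure P]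
    (σ : ℝ) (hσ : 0 < σ) (l : Fin N)
    (z : Ω → (Fin d → ℝ) → ℝ)
    (hzmeas : Measurable (Function.uncurry z))
    (hzsq : ∀ᵐ ω ∂P, IntegrableOn (fun t => (z ω t) ^ 2) (cube (τ l) B))
    (hvar : (∫ ω, (∫ t in cube (τ l) B, (z ω t) ^ 2) ∂P) = σ ^ 2 * B ^ d) :
    (∑ j, ∫ ω, (corr (z ω) (ψ j) (τ l)) ^ 2 ∂P) ≤ σ ^ 2 * B ^ d ∧
      ((∀ i i', i ≠ i' → B ≤ ‖τ i - τ i'‖) →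
        0 < (∑ j, ∫ ω, (corr (z ω) (ψ j) (τ l)) ^ 2 ∂P) →
        (∑ j, (a l j) ^ 2) / (σ ^ 2 * B ^ d)
          ≤ score ψ (cleanSignal ψ τ a) (τ l)
              / (∑ j, ∫ ω, (corr (z ω) (ψ j) (τ l)) ^ 2 ∂P)) := by
  have hσB : 0 < σ ^ 2 * B ^ d := by positivity
  -- the noise energy functional
  set I : Ω → ℝ := fun ω => ∫ t in cube (τ l) B, (z ω t) ^ 2 with hI_def
  -- measurability of ω ↦ corr (z ω) (ψ j) (τ l)
  have hzsec : ∀ ω, Measurable (z ω) := by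
    intro ω
    exact hzmeas.comp (measurable_prodMk_left)
  have hasm : ∀ j, AEStronglyMeasurable (fun ω => corr (z ω) (ψ j) (τ l)) P := by
    intro j
    have hm : StronglyMeasurable
        (fun p : Ω × (Fin d → ℝ) => z p.1 p.2 * ψ j (p.2 - τ l)) := by
      refine Measurable.stronglyMeasurable ?_
      exact hzmeas.mul (((hcont j).measurable).comp (measurable_snd.sub measurable_const))
    exact hm.integral_prod_right'.aestronglyMeasurable
  have hIm : AEStronglyMeasurable I P := by
    have hm : StronglyMeasurable (fun p : Ω × (Fin d → ℝ) => (z p.1 p.2) ^ 2) := by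
      refine Measurable.stronglyMeasurable ?_
      exact hzmeas.pow_const 2
    exact (hm.integral_prod_right'
      (ν := (volume : Measure (Fin d → ℝ)).restrict (cube (τ l) B))).aestronglyMeasurable
  -- I is integrable
  have hInt : Integrable I P := by
    by_contra h
    rw [hI_def] at h
    rw [integral_undef h] at hvar
    linarith
  -- Bessel a.e.
  have hbessel : ∀ᵐ ω ∂P, ∑ j, (corr (z ω) (ψ j) (τ l)) ^ 2 ≤ I ω := by
    filter_upwards [hzsq] with ω hω
    exact SNRAux.bessel B ψ hcont hsupp horth (τ l) (z ω)
      ((hzsec ω).aestronglyMeasurable) hω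
  -- each summand integrable
  have hcjInt : ∀ j : Fin M, Integrable (fun ω => (corr (z ω) (ψ j) (τ l)) ^ 2) P := by
    intro j
    refine Integrable.mono' hInt ?_ ?_
    · exact (continuous_pow 2).comp_aestronglyMeasurable (hasm j)
    · filter_upwards [hbessel] with ω hω
      rw [Real.norm_eq_abs, abs_of_nonneg (sq_nonneg _)]
      refine le_trans ?_ hω
      exact Finset.single_le_sum (f := fun k => (corr (z ω) (ψ k) (τ l)) ^ 2)
        (fun k _ => sq_nonneg _) (Finset.mem_univ j)
  have part1 : (∑ j, ∫ ω, (corr (z ω) (ψ j) (τ l)) ^ 2 ∂P) ≤ σ ^ 2 * B ^ d := by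
    rw [← integral_finset_sum _ (fun j _ => hcjInt j)]
    rw [← hvar]
    exact integral_mono_ae (integrable_finset_sum _ (fun j _ => hcjInt j)) hInt hbessel
  refine ⟨part1, ?_⟩
  intro hsep hpos
  -- the clean-signal score equals ‖a l‖²
  have hcorrx : ∀ j : Fin M, corr (cleanSignal ψ τ a) (ψ j) (τ l) = a l j := by
    intro j
    have hψm : ∀ k, MemLp (fun u => ψ k (u - τ l)) 2 (volume : Measure (Fin d → ℝ)) :=
      fun k => SNRAux.shift_memL2 B (ψ k) (hcont k) (hsupp k) (τ l)
    have hpt : ∀ u : Fin d → ℝ,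
        (∑ i, ∑ k, a i k * ψ k (u - τ i)) * ψ j (u - τ l)
          = ∑ k, a l k * (ψ k (u - τ l) * ψ j (u - τ l)) := by
      intro u
      rw [Finset.sum_mul]
      rw [Finset.sum_eq_single_of_mem l (Finset.mem_univ l)]
      · rw [Finset.sum_mul]
        exact Finset.sum_congr rfl (fun k _ => by ring)
      · intro i _ hil
        by_cases hz : ψ j (u - τ l) = 0
        · rw [hz, mul_zero]
        · have h1 : ‖u - τ l‖ < B / 2 := hsupp j _ hz
          have h2 : ∀ k, ψ k (u - τ i) = 0 := by
            intro k
            by_contra h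
            have h3 : ‖u - τ i‖ < B / 2 := hsupp k _ h
            have h4 : B ≤ ‖τ i - τ l‖ := hsep i l hil
            have h5 : ‖τ i - τ l‖ ≤ ‖u - τ l‖ + ‖u - τ i‖ := by
              have : τ i - τ l = (u - τ l) - (u - τ i) := by abel
              rw [this]
              exact norm_sub_le _ _
            linarith
          simp [h2]
    unfold corr
    calc (∫ u, cleanSignal ψ τ a u * ψ j (u - τ l))
        = ∫ u, ∑ k, a l k * (ψ k (u - τ l) * ψ j (u - τ l)) := by
          congr 1
          funext u
          exact hpt u
      _ = ∑ k, ∫ u, a l k * (ψ k (u - τ l) * ψ j (u - τ l)) := by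
          refine integral_finset_sum _ (fun k _ => ?_)
          exact (SNRAux.integrable_mul_of_memL2 (hψm k) (hψm j)).const_mul _
      _ = ∑ k, a l k * (if k = j then (1:ℝ) else 0) := by
          refine Finset.sum_congr rfl (fun k _ => ?_)
          rw [integral_const_mul]
          congr 1
          have := integral_sub_right_eq_self (μ := (volume : Measure (Fin d → ℝ)))
            (fun u => ψ k u * ψ j u) (τ l)
          rw [this, horth k j]
      _ = a l j := by simp
  have hscore : score ψ (cleanSignal ψ τ a) (τ l) = ∑ j, (a l j) ^ 2 := by
    unfold score
    exact Finset.sum_congr rfl (fun j _ => by rw [hcorrx j])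
  rw [hscore]
  exact div_le_div_of_nonneg_left (by positivity) hpos part1
end

section
/- Assume ‖τ_i − τ_j‖_∞ ≥ B for all i ≠ j, and let z : ℝ^d → ℝ be such that z·ψ_j(·−t) is integrable for every j and t. Define the mixed term H(t) = 2 ∑_{j=1}^M (x ⋆ ψ_j)(t) · (z ⋆ ψ_j)(t). Then for every t ∈ ℝ^d, |H(t)| ≤ 2M(3^d − 1) · max_{i ∈ I(t)} ‖a_i‖ · √(S^z(t)), where I(t) = {i ∈ {1,…,N} : ‖τ_i − t‖_∞ < B} and the maximum over an empty set is taken to be 0. -/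
open MeasureTheory Finset

private lemma two_pow_succ_le (d : ℕ) (hd : 1 ≤ d) : 2 ^ d + 1 ≤ 3 ^ d := by
  induction d with
  | zero => omega
  | succ n ih =>
    rcases Nat.eq_or_lt_of_le hd with h | h
    · have hn : n = 0 := by omega
      subst hn; norm_num
    · have h1 : 1 ≤ n := by omega
      have := ih h1
      have e1 : (2:ℕ) ^ (n+1) = 2 * 2 ^ n := by ring
      have e2 : (3:ℕ) ^ (n+1) = 3 * 3 ^ n := by ring
      have h3 : 1 ≤ 3 ^ n := Nat.one_le_pow _ _ (by norm_num)
      have h4 : (2:ℕ) ^ n ≤ 3 ^ n := Nat.pow_le_pow_left (by norm_num) n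
      omega

private lemma hcs_aux {d : ℕ} {B : ℝ} (f : (Fin d → ℝ) → ℝ)
    (hs : ∀ t, f t ≠ 0 → ‖t‖ < B / 2) (τ : Fin d → ℝ) :
    HasCompactSupport (fun u => f (u - τ)) := by
  apply HasCompactSupport.intro (isCompact_closedBall τ (B / 2))
  intro u hu
  by_contra h
  have := hs _ h
  simp [Metric.mem_closedBall, dist_eq_norm] at hu
  linarith

private lemma int_mul_aux {d : ℕ} {B : ℝ} (f g : (Fin d → ℝ) → ℝ)
    (hcf : Continuous f) (hsf : ∀ t, f t ≠ 0 → ‖t‖ < B / 2) (hcg : Continuous g)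
    (τ t : Fin d → ℝ) :
    Integrable (fun u => f (u - τ) * g (u - t)) := by
  have h1 : HasCompactSupport (fun u => f (u - τ)) := hcs_aux f hsf τ
  have h2 : HasCompactSupport (fun u => f (u - τ) * g (u - t)) := h1.mul_right
  exact ((hcf.comp (continuous_id.sub continuous_const)).mul
    (hcg.comp (continuous_id.sub continuous_const))).integrable_of_hasCompactSupport h2

private lemma coeff_bound {d : ℕ} {B : ℝ} (f g : (Fin d → ℝ) → ℝ)
    (hcf : Continuous f) (hsf : ∀ t, f t ≠ 0 → ‖t‖ < B / 2)
    (hcg : Continuous g) (hsg : ∀ t, g t ≠ 0 → ‖t‖ < B / 2)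
    (hf2 : (∫ u, f u * f u) = 1) (hg2 : (∫ u, g u * g u) = 1)
    (τ t : Fin d → ℝ) :
    |∫ u, f (u - τ) * g (u - t)| ≤ 1 := by
  have hif2 : Integrable (fun u => f (u - τ) * f (u - τ)) := int_mul_aux f f hcf hsf hcf τ τ
  have hig2 : Integrable (fun u => g (u - t) * g (u - t)) := int_mul_aux g g hcg hsg hcg t t
  have hifg : Integrable (fun u => f (u - τ) * g (u - t)) := int_mul_aux f g hcf hsf hcg τ t
  have e1 : (∫ u, f (u - τ) * f (u - τ)) = 1 := by
    rw [integral_sub_right_eq_self (fun u => f u * f u) τ]; exact hf2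
  have e2 : (∫ u, g (u - t) * g (u - t)) = 1 := by
    rw [integral_sub_right_eq_self (fun u => g u * g u) t]; exact hg2
  have habs : Integrable (fun u => |f (u - τ)| * |g (u - t)|) := by
    simpa [abs_mul] using hifg.abs
  calc |∫ u, f (u - τ) * g (u - t)| ≤ ∫ u, |f (u - τ)| * |g (u - t)| := by
        simpa [Real.norm_eq_abs] using
          norm_integral_le_integral_norm (μ := volume) (fun u => f (u - τ) * g (u - t))
    _ ≤ ∫ u, (f (u - τ) * f (u - τ) + g (u - t) * g (u - t)) / 2 := by
        apply integral_mono habs ((hif2.add hig2).div_const 2)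
        intro u
        simp only [Pi.add_apply]
        nlinarith [abs_nonneg (f (u - τ)), abs_nonneg (g (u - t)),
          sq_abs (f (u - τ)), sq_abs (g (u - t)),
          sq_nonneg (|f (u - τ)| - |g (u - t)|)]
    _ = 1 := by
        rw [integral_div, integral_add hif2 hig2, e1, e2]; norm_num

private lemma coeff_zero {d : ℕ} {B : ℝ} (f g : (Fin d → ℝ) → ℝ)
    (hsf : ∀ t, f t ≠ 0 → ‖t‖ < B / 2) (hsg : ∀ t, g t ≠ 0 → ‖t‖ < B / 2)
    (τ t : Fin d → ℝ) (h : B ≤ ‖τ - t‖) :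
    (∫ u, f (u - τ) * g (u - t)) = 0 := by
  have : ∀ u, f (u - τ) * g (u - t) = 0 := by
    intro u
    by_contra hc
    rcases mul_ne_zero_iff.1 hc with ⟨h1, h2⟩
    have e1 := hsf _ h1
    have e2 := hsg _ h2
    have : ‖τ - t‖ ≤ ‖u - τ‖ + ‖u - t‖ := by
      calc ‖τ - t‖ = ‖(u - t) - (u - τ)‖ := by ring_nf
        _ ≤ ‖u - t‖ + ‖u - τ‖ := norm_sub_le _ _
        _ = ‖u - τ‖ + ‖u - t‖ := by ring
    linarith
  simp [this]


private lemma sum_abs_le_sqrt {M : ℕ} (v : Fin M → ℝ) :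
    ∑ k, |v k| ≤ Real.sqrt M * Real.sqrt (∑ k, v k ^ 2) := by
  have h := sq_sum_le_card_mul_sum_sq (s := (Finset.univ : Finset (Fin M))) (f := fun k => |v k|)
  have h0 : 0 ≤ ∑ k, |v k| := Finset.sum_nonneg fun k _ => abs_nonneg _
  have := Real.sqrt_le_sqrt (by simpa [sq_abs] using h : (∑ k, |v k|) ^ 2 ≤ (M : ℝ) * ∑ k, v k ^ 2)
  rwa [Real.sqrt_sq h0, Real.sqrt_mul (Nat.cast_nonneg M)] at this

/-- bound on the mixed term
`H(t) = 2 ∑_j (x ⋆ ψ_j)(t)(z ⋆ ψ_j)(t)` in terms of the largest coefficient norm of the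
objects near `t` (the supremum of the empty set of norms is `0`, as `sSup ∅ = 0` in `ℝ`). -/
theorem mixed_term_bound
    (d M N : ℕ) (hd : 1 ≤ d) (hM : 1 ≤ M) (hN : 1 ≤ N) (B : ℝ) (hB : 0 < B)
    (ψ : Fin M → (Fin d → ℝ) → ℝ)
    (hcont : ∀ j, Continuous (ψ j))
    (hsupp : ∀ j, ∀ t : Fin d → ℝ, ψ j t ≠ 0 → ‖t‖ < B / 2)
    (horth : ∀ k j, (∫ u, ψ k u * ψ j u) = if k = j then (1 : ℝ) else 0)
    (τ : Fin N → Fin d → ℝ) (a : Fin N → Fin M → ℝ)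
    (hsep : ∀ i j, i ≠ j → B ≤ ‖τ i - τ j‖)
    (z : (Fin d → ℝ) → ℝ)
    (hzint : ∀ (j : Fin M) (t : Fin d → ℝ), Integrable (fun u => z u * ψ j (u - t))) :
    ∀ t : Fin d → ℝ,
      |2 * ∑ j, corr (cleanSignal ψ τ a) (ψ j) t * corr z (ψ j) t|
        ≤ 2 * (M : ℝ) * (3 ^ d - 1)
            * sSup ((fun i => Real.sqrt (∑ j, (a i j) ^ 2)) ''
                {i : Fin N | ‖τ i - t‖ < B})
            * Real.sqrt (score ψ z t) := by
  intro t
  set s : ℝ := sSup ((fun i => Real.sqrt (∑ j, (a i j) ^ 2)) ''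
      {i : Fin N | ‖τ i - t‖ < B}) with hs_def
  set I : Finset (Fin N) := Finset.univ.filter (fun i => ‖τ i - t‖ < B) with hI_def
  -- sSup properties
  have hset_fin : ((fun i => Real.sqrt (∑ j, (a i j) ^ 2)) ''
      {i : Fin N | ‖τ i - t‖ < B}).Finite := (Set.toFinite _).image _
  have hbdd : BddAbove ((fun i => Real.sqrt (∑ j, (a i j) ^ 2)) ''
      {i : Fin N | ‖τ i - t‖ < B}) := hset_fin.bddAbove
  have hs_mem : ∀ i ∈ I, Real.sqrt (∑ j, (a i j) ^ 2) ≤ s := by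
    intro i hi
    apply le_csSup hbdd
    exact Set.mem_image_of_mem _ (by simpa [hI_def] using hi)
  have hs0 : 0 ≤ s := by
    rcases Set.eq_empty_or_nonempty ((fun i => Real.sqrt (∑ j, (a i j) ^ 2)) ''
        {i : Fin N | ‖τ i - t‖ < B}) with h | h
    · rw [hs_def, h, Real.sSup_empty]
    · rcases h with ⟨x, ⟨i, hi, rfl⟩⟩
      exact le_trans (Real.sqrt_nonneg _) (le_csSup hbdd ⟨i, hi, rfl⟩)
  -- card of I
  have hcard : (I.card : ℝ) ≤ 3 ^ d - 1 := by
    have hinj : Set.InjOn (fun i => fun c : Fin d => decide (τ i c < t c)) (I : Set (Fin N)) := by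
      intro i hi i' hi' heq
      by_contra hne
      have hsepB := hsep i i' hne
      simp only [hI_def, Finset.coe_filter, Set.mem_setOf_eq] at hi hi'
      have hlt : ‖τ i - τ i'‖ < B := by
        rw [pi_norm_lt_iff hB]
        intro c
        have h1 : ‖τ i c - t c‖ < B := by
          have := (pi_norm_lt_iff hB).1 hi.2 c
          simpa using this
        have h2 : ‖τ i' c - t c‖ < B := by
          have := (pi_norm_lt_iff hB).1 hi'.2 c
          simpa using this
        have heqc : decide (τ i c < t c) = decide (τ i' c < t c) := congrFun heq c
        simp only [Real.norm_eq_abs, abs_lt] at h1 h2 ⊢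
        rcases lt_or_ge (τ i c) (t c) with hc | hc <;>
          rcases lt_or_ge (τ i' c) (t c) with hc' | hc'
        · constructor <;> [skip; skip] <;>
          · simp only [Pi.sub_apply]; linarith
        · simp [hc, not_lt.2 hc'] at heqc
        · simp [not_lt.2 hc, hc'] at heqc
        · constructor <;> [skip; skip] <;>
          · simp only [Pi.sub_apply]; linarith
      linarith
    have hle : I.card ≤ 2 ^ d := by
      have h := Finset.card_le_card_of_injOn (fun i => fun c : Fin d => decide (τ i c < t c))
        (fun a _ => Finset.mem_univ _) hinj
      simpa using h
    have := two_pow_succ_le d hd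
    have : I.card + 1 ≤ 3 ^ d := le_trans (by omega) this
    have : (I.card : ℝ) + 1 ≤ (3 : ℝ) ^ d := by exact_mod_cast this
    linarith
  -- coefficient integrals
  have hpsi2 : ∀ k : Fin M, (∫ u, ψ k u * ψ k u) = 1 := by
    intro k; simpa using horth k k
  have hcb : ∀ (k j : Fin M) (i : Fin N),
      |∫ u, ψ k (u - τ i) * ψ j (u - t)| ≤ 1 := fun k j i =>
    coeff_bound (B := B) (ψ k) (ψ j) (hcont k) (hsupp k) (hcont j) (hsupp j)
      (hpsi2 k) (hpsi2 j) (τ i) t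
  have hint : ∀ (k j : Fin M) (i : Fin N),
      Integrable (fun u => ψ k (u - τ i) * ψ j (u - t)) := fun k j i =>
    int_mul_aux (B := B) (ψ k) (ψ j) (hcont k) (hsupp k) (hcont j) (τ i) t
  -- expansion of the clean correlation
  have hA : ∀ j, corr (cleanSignal ψ τ a) (ψ j) t
      = ∑ i, ∑ k, a i k * ∫ u, ψ k (u - τ i) * ψ j (u - t) := by
    intro j
    unfold corr cleanSignal
    have heq : (fun u => (∑ i, ∑ k, a i k * ψ k (u - τ i)) * ψ j (u - t))
        = fun u => ∑ i, ∑ k, a i k * (ψ k (u - τ i) * ψ j (u - t)) := by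
      funext u
      rw [Finset.sum_mul]
      exact Finset.sum_congr rfl fun i _ => by
        rw [Finset.sum_mul]; exact Finset.sum_congr rfl fun k _ => by ring
    rw [heq, integral_finset_sum _ (fun i _ =>
      integrable_finset_sum _ (fun k _ => (hint k j i).const_mul _))]
    exact Finset.sum_congr rfl fun i _ => by
      rw [integral_finset_sum _ (fun k _ => (hint k j i).const_mul _)]
      exact Finset.sum_congr rfl fun k _ => integral_const_mul _ _
  -- bound on the clean correlation
  have hAbound : ∀ j, |corr (cleanSignal ψ τ a) (ψ j) t|
      ≤ (I.card : ℝ) * (Real.sqrt M * s) := by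
    intro j
    rw [hA j]
    have hzero : ∀ i ∈ Finset.univ, i ∉ I →
        (∑ k, a i k * ∫ u, ψ k (u - τ i) * ψ j (u - t)) = 0 := by
      intro i _ hi
      have hge : B ≤ ‖τ i - t‖ := by
        simp only [hI_def, Finset.mem_filter, Finset.mem_univ, true_and, not_lt] at hi
        exact hi
      refine Finset.sum_eq_zero fun k _ => ?_
      rw [coeff_zero (B := B) (ψ k) (ψ j) (hsupp k) (hsupp j) _ _ hge, mul_zero]
    rw [← Finset.sum_subset (Finset.subset_univ I) hzero]
    calc |∑ i ∈ I, ∑ k, a i k * ∫ u, ψ k (u - τ i) * ψ j (u - t)|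
        ≤ ∑ i ∈ I, |∑ k, a i k * ∫ u, ψ k (u - τ i) * ψ j (u - t)| :=
          Finset.abs_sum_le_sum_abs _ _
      _ ≤ ∑ i ∈ I, (Real.sqrt M * s) := by
          apply Finset.sum_le_sum
          intro i hi
          calc |∑ k, a i k * ∫ u, ψ k (u - τ i) * ψ j (u - t)|
              ≤ ∑ k, |a i k * ∫ u, ψ k (u - τ i) * ψ j (u - t)| :=
                Finset.abs_sum_le_sum_abs _ _
            _ ≤ ∑ k, |a i k| := by
                apply Finset.sum_le_sum
                intro k _
                rw [abs_mul]
                calc |a i k| * |∫ u, ψ k (u - τ i) * ψ j (u - t)|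
                    ≤ |a i k| * 1 :=
                      mul_le_mul_of_nonneg_left (hcb k j i) (abs_nonneg _)
                  _ = |a i k| := mul_one _
            _ ≤ Real.sqrt M * Real.sqrt (∑ k, a i k ^ 2) := sum_abs_le_sqrt _
            _ ≤ Real.sqrt M * s :=
                mul_le_mul_of_nonneg_left (hs_mem i hi) (Real.sqrt_nonneg _)
      _ = (I.card : ℝ) * (Real.sqrt M * s) := by
          rw [Finset.sum_const, nsmul_eq_mul]
  -- bound on the noise correlations
  have hZ : ∑ j, |corr z (ψ j) t| ≤ Real.sqrt M * Real.sqrt (score ψ z t) := by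
    have := sum_abs_le_sqrt (fun j => corr z (ψ j) t)
    simpa [score] using this
  -- put everything together
  have hK0 : 0 ≤ (I.card : ℝ) * (Real.sqrt M * s) := by positivity
  have hMM : Real.sqrt M * Real.sqrt M = (M : ℝ) := Real.mul_self_sqrt (Nat.cast_nonneg M)
  have hmain : |2 * ∑ j, corr (cleanSignal ψ τ a) (ψ j) t * corr z (ψ j) t|
      ≤ 2 * ((I.card : ℝ) * (Real.sqrt M * s) * (Real.sqrt M * Real.sqrt (score ψ z t))) := by
    rw [abs_mul, abs_two]
    apply mul_le_mul_of_nonneg_left _ (by norm_num : (0:ℝ) ≤ 2)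
    calc |∑ j, corr (cleanSignal ψ τ a) (ψ j) t * corr z (ψ j) t|
        ≤ ∑ j, |corr (cleanSignal ψ τ a) (ψ j) t * corr z (ψ j) t| :=
          Finset.abs_sum_le_sum_abs _ _
      _ ≤ ∑ j, (I.card : ℝ) * (Real.sqrt M * s) * |corr z (ψ j) t| := by
          apply Finset.sum_le_sum
          intro j _
          rw [abs_mul]
          exact mul_le_mul_of_nonneg_right (hAbound j) (abs_nonneg _)
      _ = (I.card : ℝ) * (Real.sqrt M * s) * ∑ j, |corr z (ψ j) t| := by
          rw [← Finset.mul_sum]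
      _ ≤ (I.card : ℝ) * (Real.sqrt M * s) * (Real.sqrt M * Real.sqrt (score ψ z t)) :=
          mul_le_mul_of_nonneg_left hZ hK0
  refine le_trans hmain ?_
  have hsqsc : 0 ≤ Real.sqrt (score ψ z t) := Real.sqrt_nonneg _
  have hsqM : 0 ≤ Real.sqrt M := Real.sqrt_nonneg _
  have h1 : 2 * ((I.card : ℝ) * (Real.sqrt M * s) * (Real.sqrt M * Real.sqrt (score ψ z t)))
      = 2 * (I.card : ℝ) * (M : ℝ) * s * Real.sqrt (score ψ z t) := by
    rw [show 2 * ((I.card : ℝ) * (Real.sqrt M * s) * (Real.sqrt M * Real.sqrt (score ψ z t)))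
      = 2 * (I.card : ℝ) * (Real.sqrt M * Real.sqrt M) * s * Real.sqrt (score ψ z t) from by ring,
      hMM]
  rw [h1]
  have hcard0 : (0:ℝ) ≤ (I.card : ℝ) := Nat.cast_nonneg _
  have hM0 : (0:ℝ) ≤ (M : ℝ) := Nat.cast_nonneg _
  nlinarith [mul_nonneg (mul_nonneg hM0 hs0) hsqsc, mul_nonneg hs0 hsqsc,
    mul_nonneg (mul_nonneg (mul_nonneg hM0 hcard0) hs0) hsqsc]
end

section
/- Let 0 < δ ≤ 2B and assume ‖τ_l − τ_j‖_∞ ≥ B + (3/2)δ for all l ≠ j. Then for every 1 ≤ i ≤ N and every t ∈ C(τ_i, δ), the score map of the clean signal satisfies S^x(t) = a_iᵀ D(t, τ_i, τ_i) a_i ≥ λ_min(D(t, τ_i, τ_i)) · ‖a_i‖², where λ_min denotes the smallest eigenvalue of the real symmetric matrix D(t, τ_i, τ_i). -/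
open MeasureTheory Finset Matrix

/-- The matrix `D(t,τ,τ')_{k,s} = ∑_j (∫ ψ_k(u) ψ_j(u−(t−τ)) du)(∫ ψ_s(u') ψ_j(u'−(t−τ')) du')`. -/
noncomputable def Dmat {d M : ℕ} (ψ : Fin M → (Fin d → ℝ) → ℝ)
    (t τ τ' : Fin d → ℝ) : Matrix (Fin M) (Fin M) ℝ :=
  Matrix.of fun k s =>
    ∑ j, (∫ u, ψ k u * ψ j (u - (t - τ))) * (∫ u', ψ s u' * ψ j (u' - (t - τ')))

lemma corr_clean (d M N : ℕ) (B : ℝ) (hB : 0 < B) (ψ : Fin M → (Fin d → ℝ) → ℝ)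
    (hcont : ∀ j, Continuous (ψ j))
    (hsupp : ∀ j, ∀ t : Fin d → ℝ, ψ j t ≠ 0 → ‖t‖ < B / 2)
    (τ : Fin N → Fin d → ℝ) (a : Fin N → Fin M → ℝ)
    (δ : ℝ) (hδ0 : 0 < δ)
    (hsep : ∀ l j, l ≠ j → B + (3 / 2) * δ ≤ ‖τ l - τ j‖)
    (i : Fin N) (t : Fin d → ℝ) (ht : ‖t - τ i‖ < δ / 2) (j : Fin M) :
    corr (cleanSignal ψ τ a) (ψ j) t
      = ∑ k, a i k * ∫ u, ψ k u * ψ j (u - (t - τ i)) := by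
  have hcs : ∀ k, HasCompactSupport (ψ k) := by
    intro k
    apply HasCompactSupport.intro (isCompact_closedBall (0 : Fin d → ℝ) (B / 2))
    intro x hx
    by_contra h
    exact hx (by simpa [dist_eq_norm] using (hsupp k x h).le)
  have hint : ∀ (k : Fin M) (c : Fin d → ℝ),
      Integrable (fun u => ψ k (u - c) * ψ j (u - t)) := by
    intro k c
    apply Continuous.integrable_of_hasCompactSupport
    · exact ((hcont k).comp (continuous_id.sub continuous_const)).mul
        ((hcont j).comp (continuous_id.sub continuous_const))
    · exact (((hcs k).comp_homeomorph (Homeomorph.subRight c)).mul_right)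
  have step1 : corr (cleanSignal ψ τ a) (ψ j) t
      = ∑ l, ∑ k, a l k * ∫ u, ψ k (u - τ l) * ψ j (u - t) := by
    rw [corr]
    have : ∀ u : Fin d → ℝ, cleanSignal ψ τ a u * ψ j (u - t)
        = ∑ l, ∑ k, a l k * (ψ k (u - τ l) * ψ j (u - t)) := by
      intro u
      simp only [cleanSignal, Finset.sum_mul, mul_assoc]
    rw [integral_congr_ae (Filter.Eventually.of_forall this)]
    rw [integral_finset_sum]
    · refine Finset.sum_congr rfl fun l _ => ?_
      rw [integral_finset_sum]
      · exact Finset.sum_congr rfl fun k _ => integral_const_mul _ _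
      · exact fun k _ => (hint k (τ l)).const_mul _
    · exact fun l _ => integrable_finset_sum _ fun k _ => (hint k (τ l)).const_mul _
  rw [step1, Finset.sum_eq_single i]
  · refine Finset.sum_congr rfl fun k _ => ?_
    congr 1
    have heq : ∀ u : Fin d → ℝ, ψ k (u - τ i) * ψ j (u - t)
        = (fun v => ψ k v * ψ j (v - (t - τ i))) (u - τ i) := by
      intro u
      simp only [sub_sub_sub_cancel_right]
    rw [integral_congr_ae (Filter.Eventually.of_forall heq),
      integral_sub_right_eq_self (fun v => ψ k v * ψ j (v - (t - τ i))) (τ i)]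
  · intro l _ hl
    refine Finset.sum_eq_zero fun k _ => ?_
    have hzero : ∀ u : Fin d → ℝ, ψ k (u - τ l) * ψ j (u - t) = 0 := by
      intro u
      by_contra h
      have h1 : ψ k (u - τ l) ≠ 0 := fun h' => h (by simp [h'])
      have h2 : ψ j (u - t) ≠ 0 := fun h' => h (by simp [h'])
      have n1 := hsupp k _ h1
      have n2 := hsupp j _ h2
      have tri : ‖τ l - τ i‖ ≤ ‖τ l - u‖ + ‖u - t‖ + ‖t - τ i‖ :=
        (norm_sub_le_norm_sub_add_norm_sub _ _ _).trans
          (add_le_add (norm_sub_le_norm_sub_add_norm_sub _ _ _) le_rfl)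
      rw [norm_sub_rev (τ l) u] at tri
      have := hsep l i hl
      linarith
    simp [mul_eq_zero, funext hzero]
  · intro h; exact absurd (Finset.mem_univ i) h

lemma quad_lower (M : ℕ) (hM : 1 ≤ M) (A : Matrix (Fin M) (Fin M) ℝ) (hA : A.IsHermitian)
    (a : Fin M → ℝ) :
    (⨅ k, hA.eigenvalues k) * ∑ j, a j ^ 2 ≤ ∑ k, ∑ s, a k * A k s * a s := by
  haveI : Nonempty (Fin M) := Fin.pos_iff_nonempty.mp hM
  set U : Matrix (Fin M) (Fin M) ℝ := (hA.eigenvectorUnitary : Matrix (Fin M) (Fin M) ℝ) with hU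
  set w : Fin M → ℝ := star U *ᵥ a with hw
  have hUstar : star U * U = 1 := (Matrix.mem_unitaryGroup_iff').mp hA.eigenvectorUnitary.2
  have hUU : U * star U = 1 := (Matrix.mem_unitaryGroup_iff).mp hA.eigenvectorUnitary.2
  have hvec : ∀ x : Fin M → ℝ, a ⬝ᵥ (U *ᵥ x) = w ⬝ᵥ x := by
    intro x
    rw [dotProduct_mulVec, hw]
    congr 1
    rw [Matrix.star_eq_conjTranspose, Matrix.conjTranspose_eq_transpose_of_trivial,
      Matrix.mulVec_transpose]
  have ha : U *ᵥ w = a := by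
    rw [hw, Matrix.mulVec_mulVec, hUU, Matrix.one_mulVec]
  have hform : ∑ k, ∑ s, a k * A k s * a s = ∑ k, hA.eigenvalues k * w k ^ 2 := by
    have h1 : ∑ k, ∑ s, a k * A k s * a s = a ⬝ᵥ (A *ᵥ a) := by
      simp [dotProduct, mulVec, Finset.mul_sum, mul_assoc]
    rw [h1]
    conv_lhs => rw [hA.spectral_theorem, Unitary.conjStarAlgAut_apply]
    rw [← Matrix.mulVec_mulVec, ← Matrix.mulVec_mulVec, hvec]
    simp only [← hU, ← hw]
    simp [dotProduct, mulVec_diagonal, sq, mul_comm, mul_assoc, mul_left_comm]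
  have hnorm : ∑ j, a j ^ 2 = ∑ k, w k ^ 2 := by
    have h1 : ∑ j, a j ^ 2 = a ⬝ᵥ a := by simp [dotProduct, sq]
    have h2 : ∑ k, w k ^ 2 = w ⬝ᵥ w := by simp [dotProduct, sq]
    rw [h1, h2]; nth_rewrite 2 [← ha]; rw [hvec]
  rw [hform, hnorm, Finset.mul_sum]
  apply Finset.sum_le_sum
  intro k _
  have : (⨅ k, hA.eigenvalues k) ≤ hA.eigenvalues k :=
    ciInf_le (Set.Finite.bddBelow (Set.finite_range _)) k
  exact mul_le_mul_of_nonneg_right this (sq_nonneg _)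

/-- near a center `τ_i` (within the cube `C(τ_i,δ)`), the clean score is the
quadratic form `a_iᵀ D(t,τ_i,τ_i) a_i`, which is at least `λ_min(D(t,τ_i,τ_i)) ‖a_i‖²`. -/
theorem score_lower_bound_near_center
    (d M N : ℕ) (hd : 1 ≤ d) (hM : 1 ≤ M) (hN : 1 ≤ N) (B : ℝ) (hB : 0 < B)
    (ψ : Fin M → (Fin d → ℝ) → ℝ)
    (hcont : ∀ j, Continuous (ψ j))
    (hsupp : ∀ j, ∀ t : Fin d → ℝ, ψ j t ≠ 0 → ‖t‖ < B / 2)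
    (horth : ∀ k j, (∫ u, ψ k u * ψ j u) = if k = j then (1 : ℝ) else 0)
    (τ : Fin N → Fin d → ℝ) (a : Fin N → Fin M → ℝ)
    (δ : ℝ) (hδ0 : 0 < δ) (hδ2B : δ ≤ 2 * B)
    (hsep : ∀ l j, l ≠ j → B + (3 / 2) * δ ≤ ‖τ l - τ j‖)
    (i : Fin N) (t : Fin d → ℝ) (ht : ‖t - τ i‖ < δ / 2)
    (hD : (Dmat ψ t (τ i) (τ i)).IsHermitian) :
    score ψ (cleanSignal ψ τ a) t
        = ∑ k, ∑ s, a i k * Dmat ψ t (τ i) (τ i) k s * a i s ∧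
      (⨅ k, hD.eigenvalues k) * ∑ j, (a i j) ^ 2
        ≤ ∑ k, ∑ s, a i k * Dmat ψ t (τ i) (τ i) k s * a i s := by
  
  have hc := fun j => corr_clean d M N B hB ψ hcont hsupp τ a δ hδ0 hsep i t ht j
  set c : Fin M → Fin M → ℝ := fun k j => ∫ u, ψ k u * ψ j (u - (t - τ i)) with hcdef
  have hDk : ∀ k s, Dmat ψ t (τ i) (τ i) k s = ∑ j, c k j * c s j := fun k s => rfl
  have heq : score ψ (cleanSignal ψ τ a) t
      = ∑ k, ∑ s, a i k * Dmat ψ t (τ i) (τ i) k s * a i s := by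
    rw [score]
    simp only [hc, hDk]
    simp only [sq, Finset.sum_mul_sum]
    rw [Finset.sum_comm]
    refine Finset.sum_congr rfl fun k _ => ?_
    rw [Finset.sum_comm]
    refine Finset.sum_congr rfl fun s _ => ?_
    have : a i k * (∑ j, c k j * c s j) * a i s = ∑ j, (a i k * c k j) * (a i s * c s j) := by
      rw [Finset.mul_sum, Finset.sum_mul]
      exact Finset.sum_congr rfl fun j _ => by ring
    exact this.symm
  exact ⟨heq, quad_lower M hM _ hD (a i)⟩
end

section
/- Let 0 < δ ≤ 2B, assume ‖τ_l − τ_j‖_∞ ≥ B + (3/2)δ for all l ≠ j, and assume the coefficient vectors are ordered so that ‖a_1‖ ≥ ‖a_2‖ ≥ … ≥ ‖a_N‖. Fix 1 ≤ i ≤ N, a point q ∈ C(τ_i, δ), and a point t ∈ ℝ^d such that t ∉ C(τ_j, 2B) for every j < i and t ∉ C(τ_j, δ) for every j ≥ i. Then S^x(q) − S^x(t) ≥ ‖a_i‖² · ( λ_min(D(q, τ_i, τ_i)) − ∑_{j,l ∈ I(t)} ‖D(t, τ_j, τ_l)‖_op ), where λ_min denotes the smallest eigenvalue of the real symmetric matrix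 D(q, τ_i, τ_i), I(t) = {m ∈ {1,…,N} : ‖τ_m − t‖_∞ < B}, and ‖·‖_op is the operator norm induced by the Euclidean norm on ℝ^M. -/
open MeasureTheory Finset Matrix

/-- The operator norm of an `M × M` real matrix induced by the Euclidean norm on `ℝ^M`. -/
noncomputable def matOpNorm {M : ℕ} (A : Matrix (Fin M) (Fin M) ℝ) : ℝ :=
  ‖LinearMap.toContinuousLinearMap (Matrix.toEuclideanLin A)‖


lemma euclid_norm_eq {M : ℕ} (x : Fin M → ℝ) :
    ‖(WithLp.equiv 2 (Fin M → ℝ)).symm x‖ = Real.sqrt (∑ k, x k ^ 2) := by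
  rw [EuclideanSpace.norm_eq]
  congr 1
  exact Finset.sum_congr rfl fun k _ => by simp [Real.norm_eq_abs, sq_abs, WithLp.equiv_symm_apply]

lemma dot_inner {M : ℕ} (x y : Fin M → ℝ) :
    x ⬝ᵥ y = (inner ℝ ((WithLp.equiv 2 (Fin M → ℝ)).symm x) ((WithLp.equiv 2 (Fin M → ℝ)).symm y) : ℝ) := by
  simp [PiLp.inner_apply, dotProduct, mul_comm]

lemma dot_mulVec_le {M : ℕ} (A : Matrix (Fin M) (Fin M) ℝ) (x y : Fin M → ℝ) :
    x ⬝ᵥ A *ᵥ y ≤ matOpNorm A * (Real.sqrt (∑ k, x k ^ 2) * Real.sqrt (∑ k, y k ^ 2)) := by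
  set x' := (WithLp.equiv 2 (Fin M → ℝ)).symm x
  set y' := (WithLp.equiv 2 (Fin M → ℝ)).symm y
  have h1 : x ⬝ᵥ A *ᵥ y = (inner ℝ x' (Matrix.toEuclideanLin A y') : ℝ) := by
    rw [dot_inner x (A *ᵥ y)]; rfl
  calc x ⬝ᵥ A *ᵥ y = (inner ℝ x' (Matrix.toEuclideanLin A y') : ℝ) := h1
    _ ≤ ‖x'‖ * ‖Matrix.toEuclideanLin A y'‖ := real_inner_le_norm _ _
    _ ≤ ‖x'‖ * (matOpNorm A * ‖y'‖) := by
        apply mul_le_mul_of_nonneg_left _ (norm_nonneg _)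
        exact (LinearMap.toContinuousLinearMap (Matrix.toEuclideanLin A)).le_opNorm y'
    _ = matOpNorm A * (‖x'‖ * ‖y'‖) := by ring
    _ = _ := by rw [euclid_norm_eq, euclid_norm_eq]

lemma rayleigh_min {M : ℕ} (hM : 1 ≤ M) (A : Matrix (Fin M) (Fin M) ℝ)
    (hA : A.IsHermitian) (x : Fin M → ℝ) :
    (⨅ k, hA.eigenvalues k) * (∑ k, x k ^ 2) ≤ x ⬝ᵥ A *ᵥ x := by
  haveI : Nonempty (Fin M) := ⟨⟨0, hM⟩⟩
  set L := Matrix.toEuclideanLin A with hL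
  set x' := (WithLp.equiv 2 (Fin M → ℝ)).symm x with hx'
  set b := hA.eigenvectorBasis with hb
  have hsym : L.IsSymmetric := Matrix.isHermitian_iff_isSymmetric.1 hA
  have hLb : ∀ k, L (b k) = hA.eigenvalues k • b k := by
    intro k
    have h := hA.mulVec_eigenvectorBasis k
    apply (WithLp.equiv 2 (Fin M → ℝ)).injective
    funext j
    have : (WithLp.equiv 2 (Fin M → ℝ)) (L (b k)) = A *ᵥ ⇑(b k) := rfl
    rw [this, h]
    rfl
  have hinner : ∀ k, (inner ℝ (b k) (L x') : ℝ) = hA.eigenvalues k * inner ℝ (b k) x' := by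
    intro k
    rw [← hsym (b k) x', hLb k, real_inner_smul_left]
  have hexp : (inner ℝ x' (L x') : ℝ) = ∑ k, hA.eigenvalues k * (inner ℝ (b k) x' : ℝ) ^ 2 := by
    rw [← b.sum_inner_mul_inner x' (L x')]
    refine Finset.sum_congr rfl fun k _ => ?_
    rw [hinner k, real_inner_comm x' (b k)]
    ring
  have hpar : ∑ k, (inner ℝ (b k) x' : ℝ) ^ 2 = ∑ k, x k ^ 2 := by
    have h := b.sum_inner_mul_inner x' x'
    have h2 : (inner ℝ x' x' : ℝ) = ∑ k, x k ^ 2 := by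
      simp only [PiLp.inner_apply, RCLike.inner_apply, conj_trivial, sq]; rfl
    rw [h2] at h
    rw [← h]
    exact Finset.sum_congr rfl fun k _ => by rw [real_inner_comm x' (b k)]; ring
  have hdot : x ⬝ᵥ A *ᵥ x = (inner ℝ x' (L x') : ℝ) := by
    rw [dot_inner x (A *ᵥ x)]; rfl
  rw [hdot, hexp]
  have hbdd : BddBelow (Set.range hA.eigenvalues) := (Set.finite_range _).bddBelow
  calc (⨅ k, hA.eigenvalues k) * (∑ k, x k ^ 2)
      = ∑ k, (⨅ j, hA.eigenvalues j) * (inner ℝ (b k) x' : ℝ) ^ 2 := by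
        rw [← Finset.mul_sum, hpar]
    _ ≤ ∑ k, hA.eigenvalues k * (inner ℝ (b k) x' : ℝ) ^ 2 := by
        refine Finset.sum_le_sum fun k _ => ?_
        exact mul_le_mul_of_nonneg_right (ciInf_le hbdd k) (sq_nonneg _)

section Integrals
variable {d M : ℕ} {B : ℝ} (ψ : Fin M → (Fin d → ℝ) → ℝ)
  (hcont : ∀ j, Continuous (ψ j))
  (hsupp : ∀ j, ∀ t : Fin d → ℝ, ψ j t ≠ 0 → ‖t‖ < B / 2)

include hsupp in
lemma psi_hcs (hB : 0 < B) (k : Fin M) : HasCompactSupport (ψ k) := by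
  apply HasCompactSupport.intro (isCompact_closedBall (0 : Fin d → ℝ) (B / 2))
  intro x hx
  by_contra h
  exact hx (Metric.mem_closedBall.2 (by
    rw [dist_zero_right]; exact (hsupp k x h).le))

include hcont hsupp in
lemma psi_integ (hB : 0 < B) (k j : Fin M) (v w : Fin d → ℝ) :
    Integrable (fun u => ψ k (u - v) * ψ j (u - w)) := by
  have h1 : Continuous fun u : Fin d → ℝ => ψ k (u - v) * ψ j (u - w) :=
    ((hcont k).comp (continuous_id.sub continuous_const)).mul
      ((hcont j).comp (continuous_id.sub continuous_const))
  have h2 : HasCompactSupport fun u : Fin d → ℝ => ψ k (u - v) :=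
    (psi_hcs ψ hsupp hB k).comp_homeomorph (Homeomorph.subRight v)
  exact h1.integrable_of_hasCompactSupport (h2.mul_right)

lemma psi_shift (k j : Fin M) (t τm : Fin d → ℝ) :
    (∫ u, ψ k (u - τm) * ψ j (u - t)) = ∫ u, ψ k u * ψ j (u - (t - τm)) := by
  rw [← MeasureTheory.integral_sub_right_eq_self
    (fun u => ψ k u * ψ j (u - (t - τm))) τm]
  simp only [sub_sub_sub_cancel_right]

include hsupp in
lemma psi_vanish (k j : Fin M) {t τm : Fin d → ℝ} (h : B ≤ ‖t - τm‖) :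
    (∫ u, ψ k u * ψ j (u - (t - τm))) = 0 := by
  have hz : ∀ u, ψ k u * ψ j (u - (t - τm)) = 0 := by
    intro u
    by_contra hne
    rcases mul_ne_zero_iff.1 hne with ⟨h1, h2⟩
    have e1 := hsupp k u h1
    have e2 := hsupp j _ h2
    have : ‖t - τm‖ ≤ ‖u‖ + ‖u - (t - τm)‖ := by
      have := norm_sub_le u (u - (t - τm))
      simpa using this
    linarith
  simp [hz]

end Integrals

noncomputable def Gmat {d M : ℕ} (ψ : Fin M → (Fin d → ℝ) → ℝ)
    (t τm : Fin d → ℝ) : Matrix (Fin M) (Fin M) ℝ :=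
  Matrix.of fun k j => ∫ u, ψ k u * ψ j (u - (t - τm))

lemma Dmat_eq_GGT {d M : ℕ} (ψ : Fin M → (Fin d → ℝ) → ℝ) (t τm τl : Fin d → ℝ) :
    Dmat ψ t τm τl = Gmat ψ t τm * (Gmat ψ t τl)ᵀ := by
  ext k s
  simp [Dmat, Gmat, Matrix.mul_apply]

section Expand
variable {d M N : ℕ} {B : ℝ} (ψ : Fin M → (Fin d → ℝ) → ℝ)
  (hcont : ∀ j, Continuous (ψ j))
  (hsupp : ∀ j, ∀ t : Fin d → ℝ, ψ j t ≠ 0 → ‖t‖ < B / 2)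
  (τ : Fin N → Fin d → ℝ) (a : Fin N → Fin M → ℝ)

include hcont hsupp in
lemma corr_clean_s14 (hB : 0 < B) (t : Fin d → ℝ) (j : Fin M) :
    corr (cleanSignal ψ τ a) (ψ j) t = ∑ m, ((a m) ᵥ* Gmat ψ t (τ m)) j := by
  unfold corr cleanSignal
  have hrw : (fun u => (∑ m, ∑ k, a m k * ψ k (u - τ m)) * ψ j (u - t))
      = fun u => ∑ m, ∑ k, a m k * (ψ k (u - τ m) * ψ j (u - t)) := by
    funext u
    rw [Finset.sum_mul]
    refine Finset.sum_congr rfl fun m _ => ?_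
    rw [Finset.sum_mul]
    exact Finset.sum_congr rfl fun k _ => by ring
  rw [hrw, MeasureTheory.integral_finset_sum _ (fun m _ =>
    integrable_finset_sum _ (fun k _ =>
      (psi_integ ψ hcont hsupp hB k j (τ m) t).const_mul (a m k)))]
  refine Finset.sum_congr rfl fun m _ => ?_
  rw [MeasureTheory.integral_finset_sum _ (fun k _ =>
    (psi_integ ψ hcont hsupp hB k j (τ m) t).const_mul (a m k))]
  simp only [Matrix.vecMul, dotProduct, Gmat, Matrix.of_apply]
  refine Finset.sum_congr rfl fun k _ => ?_
  rw [MeasureTheory.integral_const_mul, psi_shift]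

include hcont hsupp in
lemma score_expand (hB : 0 < B) (t : Fin d → ℝ) :
    score ψ (cleanSignal ψ τ a) t
      = ∑ m ∈ Finset.univ.filter (fun m : Fin N => ‖τ m - t‖ < B),
          ∑ l ∈ Finset.univ.filter (fun m : Fin N => ‖τ m - t‖ < B),
            (a m) ⬝ᵥ (Dmat ψ t (τ m) (τ l)) *ᵥ (a l) := by
  set I := Finset.univ.filter (fun m : Fin N => ‖τ m - t‖ < B) with hI
  have hGzero : ∀ m : Fin N, m ∉ I → Gmat ψ t (τ m) = 0 := by
    intro m hm
    have hB' : B ≤ ‖t - τ m‖ := by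
      rw [norm_sub_rev]
      exact le_of_not_gt (by simpa [hI] using hm)
    ext k j
    exact psi_vanish ψ hsupp k j hB'
  have hcorr : ∀ j : Fin M,
      corr (cleanSignal ψ τ a) (ψ j) t = ∑ m ∈ I, ((a m) ᵥ* Gmat ψ t (τ m)) j := by
    intro j
    rw [corr_clean_s14 ψ hcont hsupp τ a hB t j]
    symm
    apply Finset.sum_subset (Finset.subset_univ I)
    intro m _ hm
    rw [hGzero m hm]
    simp [Matrix.vecMul, dotProduct]
  unfold score
  simp only [hcorr]
  have hsq : ∀ j : Fin M, (∑ m ∈ I, ((a m) ᵥ* Gmat ψ t (τ m)) j) ^ 2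
      = ∑ m ∈ I, ∑ l ∈ I, ((a m) ᵥ* Gmat ψ t (τ m)) j * ((a l) ᵥ* Gmat ψ t (τ l)) j := by
    intro j
    rw [sq, Finset.sum_mul_sum]
  simp only [hsq]
  rw [Finset.sum_comm]
  refine Finset.sum_congr rfl fun m _ => ?_
  rw [Finset.sum_comm]
  refine Finset.sum_congr rfl fun l _ => ?_
  have : (a m) ⬝ᵥ (Dmat ψ t (τ m) (τ l)) *ᵥ (a l)
      = ((a m) ᵥ* Gmat ψ t (τ m)) ⬝ᵥ ((a l) ᵥ* Gmat ψ t (τ l)) := by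
    rw [Dmat_eq_GGT, ← Matrix.mulVec_mulVec, dotProduct_mulVec,
      Matrix.mulVec_transpose]
  rw [this]
  rfl

end Expand

/-- the key localization inequality. Near a center `τ_i` (at a point
`q ∈ C(τ_i,δ)`), the clean score exceeds the score at any point `t` outside
`C(τ_j,2B)` for `j < i` and outside `C(τ_j,δ)` for `j ≥ i` by at least
`‖a_i‖² (λ_min(D(q,τ_i,τ_i)) − ∑_{j,l∈I(t)} ‖D(t,τ_j,τ_l)‖_op)`. -/
theorem localization_inequality
    (d M N : ℕ) (hd : 1 ≤ d) (hM : 1 ≤ M) (hN : 1 ≤ N) (B : ℝ) (hB : 0 < B)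
    (ψ : Fin M → (Fin d → ℝ) → ℝ)
    (hcont : ∀ j, Continuous (ψ j))
    (hsupp : ∀ j, ∀ t : Fin d → ℝ, ψ j t ≠ 0 → ‖t‖ < B / 2)
    (horth : ∀ k j, (∫ u, ψ k u * ψ j u) = if k = j then (1 : ℝ) else 0)
    (τ : Fin N → Fin d → ℝ) (a : Fin N → Fin M → ℝ)
    (δ : ℝ) (hδ0 : 0 < δ) (hδ2B : δ ≤ 2 * B)
    (hsep : ∀ l j, l ≠ j → B + (3 / 2) * δ ≤ ‖τ l - τ j‖)
    (hord : ∀ i j : Fin N, i ≤ j →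
      Real.sqrt (∑ k, (a j k) ^ 2) ≤ Real.sqrt (∑ k, (a i k) ^ 2))
    (i : Fin N) (q : Fin d → ℝ) (hq : ‖q - τ i‖ < δ / 2)
    (t : Fin d → ℝ)
    (ht1 : ∀ j : Fin N, j < i → ¬ ‖t - τ j‖ < B)
    (ht2 : ∀ j : Fin N, i ≤ j → ¬ ‖t - τ j‖ < δ / 2)
    (hD : (Dmat ψ q (τ i) (τ i)).IsHermitian) :
    (∑ k, (a i k) ^ 2)
        * ((⨅ k, hD.eigenvalues k)
            - ∑ j ∈ Finset.univ.filter (fun m : Fin N => ‖τ m - t‖ < B),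
                ∑ l ∈ Finset.univ.filter (fun m : Fin N => ‖τ m - t‖ < B),
                  matOpNorm (Dmat ψ t (τ j) (τ l)))
      ≤ score ψ (cleanSignal ψ τ a) q - score ψ (cleanSignal ψ τ a) t := by
  have hA0 : 0 ≤ ∑ k, (a i k) ^ 2 := Finset.sum_nonneg fun _ _ => sq_nonneg _
  set Aq : ℝ := ∑ k, (a i k) ^ 2 with hAq
  -- score at q
  have hIq : Finset.univ.filter (fun m : Fin N => ‖τ m - q‖ < B) = {i} := by
    ext m
    simp only [Finset.mem_filter, Finset.mem_univ, true_and, Finset.mem_singleton]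
    constructor
    · intro hm
      by_contra hne
      have h1 := hsep m i hne
      have h2 : ‖τ m - τ i‖ ≤ ‖τ m - q‖ + ‖q - τ i‖ := by
        have := dist_triangle (τ m) q (τ i)
        simpa [dist_eq_norm] using this
      linarith
    · intro h
      subst h
      rw [norm_sub_rev]
      linarith
  have hSq : score ψ (cleanSignal ψ τ a) q = a i ⬝ᵥ Dmat ψ q (τ i) (τ i) *ᵥ a i := by
    rw [score_expand ψ hcont hsupp τ a hB q, hIq]
    simp
  have hq_lb : (⨅ k, hD.eigenvalues k) * Aq ≤ score ψ (cleanSignal ψ τ a) q := by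
    rw [hSq]
    exact rayleigh_min hM _ hD (a i)
  -- score at t
  set I := Finset.univ.filter (fun m : Fin N => ‖τ m - t‖ < B) with hIdef
  have hmem : ∀ m ∈ I, Real.sqrt (∑ k, (a m k) ^ 2) ≤ Real.sqrt Aq := by
    intro m hm
    have hin : ‖τ m - t‖ < B := by
      simpa [hIdef] using hm
    have him : i ≤ m := by
      by_contra h
      push_neg at h
      exact ht1 m h (by rw [norm_sub_rev] at hin; exact hin)
    exact hord i m him
  have hterm : ∀ m ∈ I, ∀ l ∈ I,
      a m ⬝ᵥ Dmat ψ t (τ m) (τ l) *ᵥ a l ≤ matOpNorm (Dmat ψ t (τ m) (τ l)) * Aq := by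
    intro m hm l hl
    calc a m ⬝ᵥ Dmat ψ t (τ m) (τ l) *ᵥ a l
        ≤ matOpNorm (Dmat ψ t (τ m) (τ l))
            * (Real.sqrt (∑ k, (a m k) ^ 2) * Real.sqrt (∑ k, (a l k) ^ 2)) :=
          dot_mulVec_le _ _ _
      _ ≤ matOpNorm (Dmat ψ t (τ m) (τ l)) * (Real.sqrt Aq * Real.sqrt Aq) := by
          apply mul_le_mul_of_nonneg_left _ (norm_nonneg _)
          exact mul_le_mul (hmem m hm) (hmem l hl) (Real.sqrt_nonneg _) (Real.sqrt_nonneg _)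
      _ = matOpNorm (Dmat ψ t (τ m) (τ l)) * Aq := by
          rw [Real.mul_self_sqrt hA0]
  have hSt : score ψ (cleanSignal ψ τ a) t
      ≤ (∑ m ∈ I, ∑ l ∈ I, matOpNorm (Dmat ψ t (τ m) (τ l))) * Aq := by
    rw [score_expand ψ hcont hsupp τ a hB t]
    calc ∑ m ∈ I, ∑ l ∈ I, a m ⬝ᵥ Dmat ψ t (τ m) (τ l) *ᵥ a l
        ≤ ∑ m ∈ I, ∑ l ∈ I, matOpNorm (Dmat ψ t (τ m) (τ l)) * Aq := by
          refine Finset.sum_le_sum fun m hm => Finset.sum_le_sum fun l hl => ?_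
          exact hterm m hm l hl
      _ = (∑ m ∈ I, ∑ l ∈ I, matOpNorm (Dmat ψ t (τ m) (τ l))) * Aq := by
          rw [Finset.sum_mul]
          exact Finset.sum_congr rfl fun m _ => by rw [Finset.sum_mul]
  have g1 : Aq * (⨅ k, hD.eigenvalues k) ≤ score ψ (cleanSignal ψ τ a) q := by
    rw [mul_comm]; exact hq_lb
  have g2 : score ψ (cleanSignal ψ τ a) t
      ≤ Aq * (∑ m ∈ I, ∑ l ∈ I, matOpNorm (Dmat ψ t (τ m) (τ l))) := by
    rw [mul_comm]; exact hSt
  rw [mul_sub]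
  linarith
end
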